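/- Let A ∈ ℂ^{M×N_a} and B ∈ ℂ^{M×N_b} be matrices with unit ℓ²-norm columns and coherences μ_a ≤ μ_b, let D = [A B] ∈ ℂ^{M×(N_a+N_b)} be their concatenation with coherence μ_d (the maximum of |d_k^H d_ℓ| over all distinct column pairs of D), and assume μ_d > 0. Define f(x) = ((1+μ_a)(1+μ_b) − x·μ_b(1+μ_a)) / (x(μ_d² − μ_a μ_b) + μ_a(1+μ_b)), x_b = (1+μ_b)/(μ_b + μ_d²), x_s = 1/μ_d if μ_a = μ_b = μ_d and x_s = (μ_d·√((1+μ_a)(1+μ_b)) − μ_a − μ_a μ_b)/(μ_d² − μ_a μ_b) otherwise, and x̄ = min{x_b, x_s}. If w ∈ ℂ^{N_a+N_b} satisfies ‖w‖₀ < (f(x̄) + x̄)/2, then w is the unique ℓ⁰-sparsest solution consistent with z = D w: for every w' with D w' = D w and ‖w'‖₀ ≤ ‖w‖₀, one has w' = w. -/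

import Mathlib

open scoped BigOperators ComplexConjugate
open Matrix

/-- Coherence of a matrix: max over distinct column pairs of |aₖᴴ aₗ| (0 if fewer than 2 columns). -/
noncomputable def coh {m n : Type*} [Fintype m] [Fintype n] (A : Matrix m n ℂ) : ℝ :=
  ⨆ k, ⨆ l, ⨆ _ : k ≠ l, ‖∑ i, conj (A i k) * A i l‖

/-- Mutual coherence between two matrices: max over column pairs of |aₖᴴ bₗ|. -/
noncomputable def mcoh {m na nb : Type*} [Fintype m] [Fintype na] [Fintype nb]
    (A : Matrix m na ℂ) (B : Matrix m nb ℂ) : ℝ :=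
  ⨆ k, ⨆ l, ‖∑ i, conj (A i k) * B i l‖

/-- All columns have unit ℓ²-norm. -/
def unitCols {m n : Type*} [Fintype m] (A : Matrix m n ℂ) : Prop :=
  ∀ k, ∑ i, ‖A i k‖ ^ 2 = 1

/-- Number of nonzero entries of a vector. -/
noncomputable def l0 {n : Type*} (v : n → ℂ) : ℕ := {i | v i ≠ 0}.ncard

/-- ℓ¹ norm of a vector. -/
noncomputable def l1 {n : Type*} [Fintype n] (v : n → ℂ) : ℝ := ∑ i, ‖v i‖

/-- Squared ℓ² norm of a vector. -/
noncomputable def l2sq {n : Type*} [Fintype n] (v : n → ℂ) : ℝ := ∑ i, ‖v i‖ ^ 2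

/-- Submatrix consisting of the columns with index in `E`. -/
def colsub {m n : Type*} (B : Matrix m n ℂ) (E : Finset n) : Matrix m {j // j ∈ E} ℂ :=
  fun i j => B i j.val

/-- Orthogonal projector onto the orthogonal complement of the column span of `B_E`. -/
noncomputable def projC {m n : Type*} [Fintype m] [DecidableEq m] [DecidableEq n]
    (B : Matrix m n ℂ) (E : Finset n) : Matrix m m ℂ :=
  1 - colsub B E * ((colsub B E)ᴴ * colsub B E)⁻¹ * (colsub B E)ᴴ
lemma coreL (α β δ : ℝ) (h0 : 0 ≤ α) (hαβ : α ≤ β) (hβδ : β ≤ δ) (hδ1 : δ ≤ 1) (hδ : 0 < δ)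
    (f : ℝ → ℝ)
    (hf : ∀ u, f u = ((1 + α) * (1 + β) - u * β * (1 + α)) /
      (u * (δ ^ 2 - α * β) + α * (1 + β)))
    (xb xs xbar : ℝ) (hxb : xb = (1 + β) / (β + δ ^ 2))
    (hxs₁ : (α = β ∧ β = δ) → xs = 1 / δ)
    (hxs₂ : ¬(α = β ∧ β = δ) →
      xs = (δ * Real.sqrt ((1 + α) * (1 + β)) - α - α * β) / (δ ^ 2 - α * β))
    (hxbar : xbar = min xb xs)
    (x : ℝ) (hx : 1 ≤ x) :
    f xbar + xbar ≤ max (f x) 1 + x := by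
  have hβ0 : 0 ≤ β := le_trans h0 hαβ
  have h1α : (0:ℝ) < 1 + α := by linarith
  have h1β : (0:ℝ) < 1 + β := by linarith
  have hΔ : 0 ≤ δ ^ 2 - α * β := by nlinarith
  rcases eq_or_lt_of_le hΔ with hΔ0 | hΔpos
  · -- degenerate: α = β = δ
    have hβδ' : β = δ := by nlinarith
    have hαβ' : α = β := by nlinarith
    subst hβδ' hαβ'
    have hxs : xs = 1 / α := hxs₁ ⟨rfl, rfl⟩
    have hxb' : xb = 1 / α := by rw [hxb]; field_simp
    have hg : ∀ y, f y + y = 1 + 1 / α := by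
      intro y
      rw [hf]
      have h1 : y * (α ^ 2 - α * α) + α * (1 + α) = α * (1 + α) := by ring
      rw [h1]
      field_simp
      ring
    have hxbar' : xbar = 1 / α := by rw [hxbar, hxs, hxb']; simp
    calc f xbar + xbar = 1 + 1/α := by rw [hxbar']; exact hg _
      _ = f x + x := (hg x).symm
      _ ≤ max (f x) 1 + x := by gcongr; exact le_max_left _ _
  · -- Δ > 0
    have hne : ¬(α = β ∧ β = δ) := by
      rintro ⟨rfl, rfl⟩; nlinarith
    have hxs := hxs₂ hne
    have hKpos : 0 < (1 + α) * (1 + β) * δ ^ 2 := by positivity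
    have hrpos : 0 < δ * Real.sqrt ((1 + α) * (1 + β)) := by positivity
    set r := δ * Real.sqrt ((1 + α) * (1 + β)) with hr
    have hrsq : r ^ 2 = (1 + α) * (1 + β) * δ ^ 2 := by
      rw [hr, mul_pow, Real.sq_sqrt (by positivity)]; ring
    clear_value r
    -- the key identity
    have hid : ∀ y, y * (δ ^ 2 - α * β) + α * (1 + β) ≠ 0 →
        (f y + y) * ((δ ^ 2 - α * β) * (y * (δ ^ 2 - α * β) + α * (1 + β))) =
        (y * (δ ^ 2 - α * β) + α * (1 + β)) ^ 2 + (1 + α) * (1 + β) * δ ^ 2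
          - (α + β + 2 * α * β) * (y * (δ ^ 2 - α * β) + α * (1 + β)) := by
      intro y hy
      rw [hf]
      field_simp
      ring
    have hTx : 0 < x * (δ ^ 2 - α * β) + α * (1 + β) := by nlinarith
    have hTxs : xs * (δ ^ 2 - α * β) + α * (1 + β) = r := by
      rw [hxs, div_mul_cancel₀ _ (ne_of_gt hΔpos)]; ring
    have hbd : (0:ℝ) < β + δ ^ 2 := by positivity
    have hTxb : xb * (δ ^ 2 - α * β) + α * (1 + β) = (1 + α) * (1 + β) * δ ^ 2 / (β + δ ^ 2) := by
      rw [hxb]; field_simp; ring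
    have hTxbpos : 0 < xb * (δ ^ 2 - α * β) + α * (1 + β) := by rw [hTxb]; positivity
    have hfxb : f xb = 1 := by
      rw [hf]
      rw [div_eq_one_iff_eq (ne_of_gt hTxbpos)]
      rw [hxb]; field_simp; ring
    have i2 := hid x (ne_of_gt hTx)
    rcases le_total xs xb with hcmp | hcmp
    · -- xbar = xs
      have hxbar' : xbar = xs := by rw [hxbar, min_eq_right hcmp]
      have hTxspos : 0 < xs * (δ ^ 2 - α * β) + α * (1 + β) := by rw [hTxs]; exact hrpos
      have i1 := hid xs (ne_of_gt hTxspos)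
      rw [hTxs] at i1
      set t := x * (δ ^ 2 - α * β) + α * (1 + β) with ht
      clear_value t
      have key : ((f x + x) - (f xs + xs)) * ((δ ^ 2 - α * β) * t * r) =
          r * (t - r) ^ 2 := by
        linear_combination r * i2 - t * i1 + (t - r) * hrsq
      have hP : 0 < (δ ^ 2 - α * β) * t * r := mul_pos (mul_pos hΔpos hTx) hrpos
      have h9 : (0:ℝ) * ((δ ^ 2 - α * β) * t * r) ≤
          ((f x + x) - (f xs + xs)) * ((δ ^ 2 - α * β) * t * r) := by
        rw [key, zero_mul]; positivity
      have hle : f xs + xs ≤ f x + x := by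
        have := le_of_mul_le_mul_right h9 hP; linarith
      rw [hxbar']
      calc f xs + xs ≤ f x + x := hle
        _ ≤ max (f x) 1 + x := by gcongr; exact le_max_left _ _
    · -- xbar = xb
      have hxbar' : xbar = xb := by rw [hxbar, min_eq_left hcmp]
      rw [hxbar', hfxb]
      rcases le_total xb x with hxx | hxx
      · have : (1:ℝ) ≤ max (f x) 1 := le_max_right _ _
        linarith
      · -- x ≤ xb : show f x + x ≥ 1 + xb = f xb + xb
        have i3 := hid xb (ne_of_gt hTxbpos)
        set t := x * (δ ^ 2 - α * β) + α * (1 + β) with ht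
        set tb := xb * (δ ^ 2 - α * β) + α * (1 + β) with htb
        have hTmono : t ≤ tb := by
          rw [ht, htb]; exact add_le_add (mul_le_mul_of_nonneg_right hxx hΔ) le_rfl
        have hTxb_le_r : tb ≤ r := by
          rw [← hTxs, htb]; exact add_le_add (mul_le_mul_of_nonneg_right hcmp hΔ) le_rfl
        clear_value t tb
        have key : ((f x + x) - (f xb + xb)) * ((δ ^ 2 - α * β) * t * tb) =
            (tb - t) * ((1 + α) * (1 + β) * δ ^ 2 - t * tb) := by
          linear_combination tb * i2 - t * i3
        have hKtt : t * tb ≤ (1 + α) * (1 + β) * δ ^ 2 := by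
          rw [← hrsq]
          calc t * tb ≤ r * r := by
                apply mul_le_mul (le_trans hTmono hTxb_le_r) hTxb_le_r (le_of_lt hTxbpos) hrpos.le
            _ = r ^ 2 := by ring
        have hP : 0 < (δ ^ 2 - α * β) * t * tb := mul_pos (mul_pos hΔpos hTx) hTxbpos
        have h9 : (0:ℝ) * ((δ ^ 2 - α * β) * t * tb) ≤
            ((f x + x) - (f xb + xb)) * ((δ ^ 2 - α * β) * t * tb) := by
          rw [key, zero_mul]
          exact mul_nonneg (by linarith) (by linarith)
        have hle : f xb + xb ≤ f x + x := by
          have := le_of_mul_le_mul_right h9 hP; linarith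
        rw [hfxb] at hle
        calc 1 + xb ≤ f x + x := hle
          _ ≤ max (f x) 1 + x := by gcongr; exact le_max_left _ _


set_option maxHeartbeats 1000000 in
lemma core (α β δ : ℝ) (h0 : 0 ≤ α) (hαβ : α ≤ β) (hβδ : β ≤ δ) (hδ1 : δ ≤ 1) (hδ : 0 < δ)
    (f : ℝ → ℝ)
    (hf : ∀ u, f u = ((1 + α) * (1 + β) - u * β * (1 + α)) /
      (u * (δ ^ 2 - α * β) + α * (1 + β)))
    (xb xs xbar : ℝ) (hxb : xb = (1 + β) / (β + δ ^ 2))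
    (hxs₁ : (α = β ∧ β = δ) → xs = 1 / δ)
    (hxs₂ : ¬(α = β ∧ β = δ) →
      xs = (δ * Real.sqrt ((1 + α) * (1 + β)) - α - α * β) / (δ ^ 2 - α * β))
    (hxbar : xbar = min xb xs)
    (X Y a b p l1u l1s : ℝ)
    (hX0 : 0 ≤ X) (hY0 : 0 ≤ Y) (hXa : 0 < a → 1 ≤ X) (hYb : 0 < b → 1 ≤ Y)
    (ha : 0 ≤ a) (hb : 0 ≤ b) (hab : 0 < a ∨ 0 < b)
    (hl1u : 0 ≤ l1u) (hl1s : 0 ≤ l1s) (hp : 0 ≤ p)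
    (h1 : (1 + α) * a - α * l1u ^ 2 ≤ p)
    (h2 : (1 + β) * b - β * l1s ^ 2 ≤ p)
    (h3 : p ≤ δ * (l1u * l1s))
    (hcu : l1u ^ 2 ≤ X * a) (hcs : l1s ^ 2 ≤ Y * b) :
    f xbar + xbar ≤ X + Y := by
  have hβ0 : 0 ≤ β := le_trans h0 hαβ
  have hΔ : 0 ≤ δ ^ 2 - α * β := by nlinarith
  have hL := coreL α β δ h0 hαβ hβδ hδ1 hδ f hf xb xs xbar hxb hxs₁ hxs₂ hxbar
  have key1β : 0 < β → f xbar + xbar ≤ 1 + 1 / β := by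
    intro hβ
    have hβ1 : β ≤ 1 := le_trans hβδ hδ1
    have h1β : (1:ℝ) ≤ 1 / β := by
      rw [le_div_iff₀ hβ]; linarith
    have hpos : 0 < 1 / β * (δ ^ 2 - α * β) + α * (1 + β) := by
      have heq : 1 / β * (δ ^ 2 - α * β) + α * (1 + β) = (δ ^ 2 + α * β ^ 2) / β := by
        field_simp; ring
      rw [heq]; positivity
    have hfle : f (1 / β) ≤ 1 := by
      rw [hf, div_le_one hpos]
      have hββ : (1:ℝ) / β * β = 1 := by field_simp
      nlinarith [hββ]
    have := hL (1 / β) h1β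
    rw [max_eq_right hfle] at this
    exact this
  have honeβ : 0 < β → (1 + β) / β = 1 + 1 / β := by intro h; field_simp; ring
  rcases eq_or_lt_of_le ha with ha0 | ha0
  · -- a = 0
    have hbpos : 0 < b := hab.resolve_left (by rw [← ha0]; simp)
    have hu0 : l1u = 0 := by
      have h : l1u ^ 2 = 0 := le_antisymm (by nlinarith) (sq_nonneg _)
      exact pow_eq_zero_iff two_ne_zero |>.1 h
    have hp0 : p = 0 := le_antisymm (by rw [hu0] at h3; simpa using h3) hp
    have hβ : 0 < β := by
      rcases eq_or_lt_of_le hβ0 with h | h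
      · exfalso; rw [← h] at h2; nlinarith
      · exact h
    have hY' : (1 + β) ≤ β * Y := by
      have step : (1 + β) * b ≤ (β * Y) * b := by
        nlinarith [mul_le_mul_of_nonneg_left hcs hβ0]
      exact le_of_mul_le_mul_right step hbpos
    have hYge : 1 + 1 / β ≤ Y := by
      rw [← honeβ hβ, div_le_iff₀ hβ]; linarith
    linarith [key1β hβ]
  · -- 0 < a
    have hX1 : 1 ≤ X := hXa ha0
    rcases eq_or_lt_of_le hb with hb0 | hb0
    · -- b = 0
      have hs0 : l1s = 0 := by
        have h : l1s ^ 2 = 0 := le_antisymm (by nlinarith) (sq_nonneg _)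
        exact pow_eq_zero_iff two_ne_zero |>.1 h
      have hp0 : p = 0 := le_antisymm (by rw [hs0] at h3; simpa using h3) hp
      have hα : 0 < α := by
        rcases eq_or_lt_of_le h0 with h | h
        · exfalso; rw [← h] at h1; nlinarith
        · exact h
      have hβ : 0 < β := lt_of_lt_of_le hα hαβ
      have hX' : (1 + α) ≤ α * X := by
        have step : (1 + α) * a ≤ (α * X) * a := by
          nlinarith [mul_le_mul_of_nonneg_left hcu h0]
        exact le_of_mul_le_mul_right step ha0
      have hXge : 1 + 1 / α ≤ X := by
        have e : (1 + α) / α = 1 + 1 / α := by field_simp; try ring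
        rw [← e, div_le_iff₀ hα]; linarith
      have h1b : 1 / β ≤ 1 / α := one_div_le_one_div_of_le hα hαβ
      linarith [key1β hβ]
    · -- 0 < b
      have hY1 : 1 ≤ Y := hYb hb0
      rcases le_or_gt ((1 + β) - β * Y) 0 with hq2 | hq2
      · have hβ : 0 < β := by
          rcases eq_or_lt_of_le hβ0 with h | h
          · exfalso; rw [← h] at hq2; nlinarith
          · exact h
        have hYge : 1 + 1 / β ≤ Y := by
          rw [← honeβ hβ, div_le_iff₀ hβ]; linarith
        linarith [key1β hβ]
      · rcases le_or_gt ((1 + α) - α * X) 0 with hq1 | hq1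
        · have hα : 0 < α := by
            rcases eq_or_lt_of_le h0 with h | h
            · exfalso; rw [← h] at hq1; nlinarith
            · exact h
          have hβ : 0 < β := lt_of_lt_of_le hα hαβ
          have hXge : 1 + 1 / α ≤ X := by
            have e : (1 + α) / α = 1 + 1 / α := by field_simp; try ring
            rw [← e, div_le_iff₀ hα]; linarith
          have h1b : 1 / β ≤ 1 / α := one_div_le_one_div_of_le hα hαβ
          linarith [key1β hβ]
        · -- main case
          have hpu : ((1 + α) - α * X) * a ≤ p := by
            nlinarith [mul_le_mul_of_nonneg_left hcu h0]
          have hps : ((1 + β) - β * Y) * b ≤ p := by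
            nlinarith [mul_le_mul_of_nonneg_left hcs hβ0]
          have hXa0 : 0 ≤ X * a := mul_nonneg hX0 ha
          have hYb0 : 0 ≤ Y * b := mul_nonneg hY0 hb
          have hpsq : p ^ 2 ≤ δ ^ 2 * ((X * a) * (Y * b)) := by
            have s1 : p ^ 2 ≤ (δ * (l1u * l1s)) ^ 2 := by
              have := pow_le_pow_left₀ hp h3 2
              simpa using this
            have s2 : l1u ^ 2 * l1s ^ 2 ≤ (X * a) * (Y * b) :=
              mul_le_mul hcu hcs (sq_nonneg _) hXa0
            calc p ^ 2 ≤ (δ * (l1u * l1s)) ^ 2 := s1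
              _ = δ ^ 2 * (l1u ^ 2 * l1s ^ 2) := by ring
              _ ≤ δ ^ 2 * ((X * a) * (Y * b)) := by
                  exact mul_le_mul_of_nonneg_left s2 (sq_nonneg δ)
          have hmain : ((1 + α) - α * X) * ((1 + β) - β * Y) ≤ δ ^ 2 * X * Y := by
            have hprod : (((1 + α) - α * X) * a) * (((1 + β) - β * Y) * b) ≤ p * p :=
              mul_le_mul hpu hps (mul_nonneg (le_of_lt hq2) hb) hp
            have step : (((1 + α) - α * X) * ((1 + β) - β * Y)) * (a * b) ≤
                (δ ^ 2 * X * Y) * (a * b) := by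
              calc (((1 + α) - α * X) * ((1 + β) - β * Y)) * (a * b)
                  = (((1 + α) - α * X) * a) * (((1 + β) - β * Y) * b) := by ring
                _ ≤ p * p := hprod
                _ = p ^ 2 := by ring
                _ ≤ δ ^ 2 * ((X * a) * (Y * b)) := hpsq
                _ = (δ ^ 2 * X * Y) * (a * b) := by ring
            exact le_of_mul_le_mul_right step (mul_pos ha0 hb0)
          have hT : 0 < Y * (δ ^ 2 - α * β) + α * (1 + β) := by
            have := mul_le_mul_of_nonneg_right hY1 hΔ
            nlinarith
          have hfY : f Y ≤ X := by
            rw [hf, div_le_iff₀ hT]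
            linear_combination hmain
          have hLY := hL Y hY1
          have hmax : max (f Y) 1 ≤ X := max_le hfY hX1
          linarith

section Helpers

variable {n : Type*} [Fintype n]

lemma l0_eq_card (v : n → ℂ) [DecidableEq n] [DecidablePred fun i => v i ≠ 0] :
    l0 v = (Finset.univ.filter fun i => v i ≠ 0).card := by
  rw [l0, ← Set.ncard_coe_finset]
  congr 1
  ext i; simp

lemma l1_nonneg (v : n → ℂ) : 0 ≤ l1 v :=
  Finset.sum_nonneg fun i _ => norm_nonneg _

lemma l2sq_nonneg (v : n → ℂ) : 0 ≤ l2sq v :=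
  Finset.sum_nonneg fun i _ => sq_nonneg _

lemma l2sq_pos (v : n → ℂ) (hv : v ≠ 0) : 0 < l2sq v := by
  obtain ⟨i, hi⟩ : ∃ i, v i ≠ 0 := by
    by_contra h; push_neg at h; exact hv (funext h)
  exact Finset.sum_pos' (fun j _ => sq_nonneg _)
    ⟨i, Finset.mem_univ i, by have := norm_pos_iff.2 hi; positivity⟩

lemma l0_pos (v : n → ℂ) (hv : v ≠ 0) : 1 ≤ l0 v := by
  obtain ⟨i, hi⟩ : ∃ i, v i ≠ 0 := by
    by_contra h; push_neg at h; exact hv (funext h)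
  rw [l0]
  exact Set.ncard_pos (Set.toFinite _) |>.2 ⟨i, hi⟩

lemma l1_sq_le (v : n → ℂ) : l1 v ^ 2 ≤ (l0 v : ℝ) * l2sq v := by
  classical
  set s := Finset.univ.filter fun i => v i ≠ 0 with hs
  have h1 : l1 v = ∑ i ∈ s, ‖v i‖ := by
    rw [l1]
    refine (Finset.sum_subset (Finset.subset_univ s) ?_).symm
    intro i _ hi
    simp only [hs, Finset.mem_filter, Finset.mem_univ, true_and, not_not] at hi
    simp [hi]
  have h2 : l2sq v = ∑ i ∈ s, ‖v i‖ ^ 2 := by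
    rw [l2sq]
    refine (Finset.sum_subset (Finset.subset_univ s) ?_).symm
    intro i _ hi
    simp only [hs, Finset.mem_filter, Finset.mem_univ, true_and, not_not] at hi
    simp [hi]
  rw [h1, h2, l0_eq_card v, ← hs]
  have := sq_sum_le_card_mul_sum_sq (s := s) (f := fun i => ‖v i‖)
  exact_mod_cast this

lemma l0_sum_split {n1 n2 : Type*} [Fintype n1] [Fintype n2] (v : (n1 ⊕ n2) → ℂ) :
    l0 v = l0 (v ∘ Sum.inl) + l0 (v ∘ Sum.inr) := by
  rw [l0, l0, l0]
  have h : {i | v i ≠ 0} =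
      Sum.inl '' {k | (v ∘ Sum.inl) k ≠ 0} ∪ Sum.inr '' {k | (v ∘ Sum.inr) k ≠ 0} := by
    ext x
    cases x with
    | inl k => simp
    | inr k => simp
  rw [h, Set.ncard_union_eq ?_ (Set.toFinite _) (Set.toFinite _),
    Set.ncard_image_of_injective _ Sum.inl_injective,
    Set.ncard_image_of_injective _ Sum.inr_injective]
  · rw [Set.disjoint_iff]
    rintro x ⟨⟨k, _, rfl⟩, ⟨k', _, h'⟩⟩
    simp at h'
lemma l0_sub_le (x y : n → ℂ) : l0 (x - y) ≤ l0 x + l0 y := by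
  rw [l0, l0, l0]
  have h : {i | (x - y) i ≠ 0} ⊆ {i | x i ≠ 0} ∪ {i | y i ≠ 0} := by
    intro i hi
    by_contra h
    simp only [Set.mem_union, Set.mem_setOf_eq, not_or, not_not] at h
    simp [Pi.sub_apply, h.1, h.2] at hi
  calc {i | (x - y) i ≠ 0}.ncard ≤ ({i | x i ≠ 0} ∪ {i | y i ≠ 0}).ncard :=
        Set.ncard_le_ncard h (Set.toFinite _)
    _ ≤ _ := Set.ncard_union_le _ _

end Helpers


section Gram

variable {m : Type*} [Fintype m]

lemma conj_mul_self (z : ℂ) : conj z * z = ((‖z‖ ^ 2 : ℝ) : ℂ) := by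
  rw [mul_comm, Complex.mul_conj]
  norm_cast
  simp [Complex.normSq_eq_norm_sq]

lemma gram_sum {n1 n2 : Type*} [Fintype n1] [Fintype n2]
    (C1 : Matrix m n1 ℂ) (C2 : Matrix m n2 ℂ) (v1 : n1 → ℂ) (v2 : n2 → ℂ) :
    ∑ i, conj ((C1.mulVec v1) i) * ((C2.mulVec v2) i)
      = ∑ k, ∑ l, conj (v1 k) * v2 l * ∑ i, conj (C1 i k) * C2 i l := by
  have h1 : ∀ i, conj ((C1.mulVec v1) i) * ((C2.mulVec v2) i)
      = ∑ k, ∑ l, (conj (C1 i k) * conj (v1 k)) * (C2 i l * v2 l) := by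
    intro i
    rw [Matrix.mulVec, Matrix.mulVec, dotProduct, dotProduct, map_sum,
      Finset.sum_mul_sum]
    refine Finset.sum_congr rfl fun k _ => Finset.sum_congr rfl fun l _ => ?_
    rw [_root_.map_mul]
  calc ∑ i, conj ((C1.mulVec v1) i) * ((C2.mulVec v2) i)
      = ∑ i, ∑ k, ∑ l, (conj (C1 i k) * conj (v1 k)) * (C2 i l * v2 l) :=
        Finset.sum_congr rfl fun i _ => h1 i
    _ = ∑ k, ∑ i, ∑ l, (conj (C1 i k) * conj (v1 k)) * (C2 i l * v2 l) := Finset.sum_comm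
    _ = ∑ k, ∑ l, ∑ i, (conj (C1 i k) * conj (v1 k)) * (C2 i l * v2 l) :=
        Finset.sum_congr rfl fun k _ => Finset.sum_comm
    _ = ∑ k, ∑ l, conj (v1 k) * v2 l * ∑ i, conj (C1 i k) * C2 i l := by
        refine Finset.sum_congr rfl fun k _ => Finset.sum_congr rfl fun l _ => ?_
        rw [Finset.mul_sum]
        exact Finset.sum_congr rfl fun i _ => by ring

lemma sum_conj_self (p : m → ℂ) :
    ∑ i, conj (p i) * p i = ((∑ i, ‖p i‖ ^ 2 : ℝ) : ℂ) := by
  rw [show (∑ i, conj (p i) * p i) = ∑ i, ((‖p i‖ ^ 2 : ℝ) : ℂ) from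
    Finset.sum_congr rfl fun i _ => conj_mul_self _]
  norm_cast

/-- lower bound for the Gram quadratic form -/
lemma gram_lower {n1 : Type*} [Fintype n1] (C : Matrix m n1 ℂ) (hC : unitCols C)
    (μ : ℝ) (hμ : ∀ k l, k ≠ l → ‖∑ i, conj (C i k) * C i l‖ ≤ μ) (v : n1 → ℂ) :
    (1 + μ) * l2sq v - μ * (l1 v) ^ 2 ≤ l2sq (C.mulVec v) := by
  classical
  have hP : ((l2sq (C.mulVec v) : ℝ) : ℂ) = ∑ i, conj ((C.mulVec v) i) * ((C.mulVec v) i) :=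
    (sum_conj_self _).symm
  rw [gram_sum] at hP
  -- split diagonal
  have hsplit : ∀ k : n1, ∑ l, conj (v k) * v l * ∑ i, conj (C i k) * C i l
      = conj (v k) * v k + ∑ l ∈ Finset.univ.erase k,
          conj (v k) * v l * ∑ i, conj (C i k) * C i l := by
    intro k
    rw [← Finset.sum_erase_add _ _ (Finset.mem_univ k)]
    rw [add_comm]
    congr 1
    rw [sum_conj_self (fun i => C i k)]
    rw [l2sq] at *
    rw [show (∑ i, ‖C i k‖ ^ 2) = 1 from hC k]
    push_cast
    ring
  have hPsum : ((l2sq (C.mulVec v) : ℝ) : ℂ) = ((l2sq v : ℝ) : ℂ) +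
      ∑ k, ∑ l ∈ Finset.univ.erase k, conj (v k) * v l * ∑ i, conj (C i k) * C i l := by
    rw [hP, Finset.sum_congr rfl fun k _ => hsplit k, Finset.sum_add_distrib]
    congr 1
    rw [sum_conj_self v]
    rfl
  set E : ℂ := ∑ k, ∑ l ∈ Finset.univ.erase k, conj (v k) * v l * ∑ i, conj (C i k) * C i l
    with hE
  have hre : l2sq (C.mulVec v) = l2sq v + E.re := by
    have := congrArg Complex.re hPsum
    simpa using this
  have hEbound : ‖E‖ ≤ μ * ((l1 v) ^ 2 - l2sq v) := by
    calc ‖E‖ ≤ ∑ k, ‖∑ l ∈ Finset.univ.erase k, conj (v k) * v l * ∑ i, conj (C i k) * C i l‖ :=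
          norm_sum_le _ _
      _ ≤ ∑ k, ∑ l ∈ Finset.univ.erase k, ‖v k‖ * ‖v l‖ * μ := by
          apply Finset.sum_le_sum
          intro k _
          calc ‖∑ l ∈ Finset.univ.erase k, conj (v k) * v l * ∑ i, conj (C i k) * C i l‖
              ≤ ∑ l ∈ Finset.univ.erase k, ‖conj (v k) * v l * ∑ i, conj (C i k) * C i l‖ :=
                norm_sum_le _ _
            _ ≤ ∑ l ∈ Finset.univ.erase k, ‖v k‖ * ‖v l‖ * μ := by
                apply Finset.sum_le_sum
                intro l hl
                rw [norm_mul, norm_mul, RCLike.norm_conj]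
                have hkl : k ≠ l := (Finset.ne_of_mem_erase hl).symm
                exact mul_le_mul_of_nonneg_left (hμ k l hkl)
                  (mul_nonneg (norm_nonneg _) (norm_nonneg _))
      _ = μ * ((l1 v) ^ 2 - l2sq v) := by
          have hrow : ∀ k : n1, ∑ l ∈ Finset.univ.erase k, ‖v k‖ * ‖v l‖ * μ
              = μ * (‖v k‖ * (l1 v - ‖v k‖)) := by
            intro k
            rw [show (∑ l ∈ Finset.univ.erase k, ‖v k‖ * ‖v l‖ * μ)
                = μ * ‖v k‖ * ∑ l ∈ Finset.univ.erase k, ‖v l‖ by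
              rw [Finset.mul_sum]; exact Finset.sum_congr rfl fun l _ => by ring]
            rw [Finset.sum_erase_eq_sub (Finset.mem_univ k)]
            rw [l1]
            ring
          rw [Finset.sum_congr rfl fun k _ => hrow k]
          rw [← Finset.mul_sum]
          have : ∑ k, ‖v k‖ * (l1 v - ‖v k‖) = (l1 v) ^ 2 - l2sq v := by
            rw [l1, l2sq]
            rw [Finset.sum_congr rfl (fun k _ => by ring :
              ∀ k ∈ Finset.univ, ‖v k‖ * ((∑ i, ‖v i‖) - ‖v k‖)
                = ‖v k‖ * (∑ i, ‖v i‖) - ‖v k‖ ^ 2)]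
            rw [Finset.sum_sub_distrib, ← Finset.sum_mul]
            ring
          rw [this]
  have h1 := Complex.abs_re_le_norm E
  have h2 := neg_abs_le E.re
  linarith [hre, hEbound]

/-- upper bound for the cross Gram form -/
lemma gram_upper {n1 n2 : Type*} [Fintype n1] [Fintype n2]
    (C1 : Matrix m n1 ℂ) (C2 : Matrix m n2 ℂ)
    (μ : ℝ) (hμ : ∀ k l, ‖∑ i, conj (C1 i k) * C2 i l‖ ≤ μ)
    (v1 : n1 → ℂ) (v2 : n2 → ℂ) :
    ‖∑ i, conj ((C1.mulVec v1) i) * ((C2.mulVec v2) i)‖ ≤ μ * (l1 v1 * l1 v2) := by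
  rw [gram_sum]
  calc ‖∑ k, ∑ l, conj (v1 k) * v2 l * ∑ i, conj (C1 i k) * C2 i l‖
      ≤ ∑ k, ∑ l, ‖v1 k‖ * ‖v2 l‖ * μ := by
        refine (norm_sum_le _ _).trans (Finset.sum_le_sum fun k _ => ?_)
        refine (norm_sum_le _ _).trans (Finset.sum_le_sum fun l _ => ?_)
        rw [norm_mul, norm_mul, RCLike.norm_conj]
        exact mul_le_mul_of_nonneg_left (hμ k l)
          (mul_nonneg (norm_nonneg _) (norm_nonneg _))
    _ = μ * (l1 v1 * l1 v2) := by
        rw [l1, l1, Finset.sum_mul_sum]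
        rw [Finset.mul_sum]
        refine Finset.sum_congr rfl fun k _ => ?_
        rw [Finset.mul_sum]
        refine Finset.sum_congr rfl fun l _ => by ring

end Gram

section Coh

variable {m n : Type*} [Fintype m] [Fintype n]

lemma norm_le_coh (A : Matrix m n ℂ) {k l : n} (h : k ≠ l) :
    ‖∑ i, conj (A i k) * A i l‖ ≤ coh A := by
  rw [coh]
  calc ‖∑ i, conj (A i k) * A i l‖
      = ⨆ _ : k ≠ l, ‖∑ i, conj (A i k) * A i l‖ := (ciSup_pos (p := k ≠ l) (f := fun _ => ‖∑ i, conj (A i k) * A i l‖) h).symm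
    _ ≤ ⨆ l', ⨆ _ : k ≠ l', ‖∑ i, conj (A i k) * A i l'‖ :=
        le_ciSup (f := fun l' => ⨆ _ : k ≠ l', ‖∑ i, conj (A i k) * A i l'‖)
          (Set.Finite.bddAbove (Set.finite_range _)) l
    _ ≤ ⨆ k', ⨆ l', ⨆ _ : k' ≠ l', ‖∑ i, conj (A i k') * A i l'‖ :=
        le_ciSup (f := fun k' => ⨆ l', ⨆ _ : k' ≠ l', ‖∑ i, conj (A i k') * A i l'‖)
          (Set.Finite.bddAbove (Set.finite_range _)) k

lemma coh_nonneg (A : Matrix m n ℂ) : 0 ≤ coh A := by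
  rcases isEmpty_or_nonempty n with hn | hn
  · rw [coh, Real.iSup_of_isEmpty]
  · obtain ⟨k⟩ := hn
    rw [coh]
    have h0 : (0:ℝ) = ⨆ _ : k ≠ k, ‖∑ i, conj (A i k) * A i k‖ := by
      haveI : IsEmpty (k ≠ k) := ⟨fun h => h rfl⟩
      rw [Real.iSup_of_isEmpty]
    calc (0:ℝ) = ⨆ _ : k ≠ k, ‖∑ i, conj (A i k) * A i k‖ := h0
      _ ≤ ⨆ l', ⨆ _ : k ≠ l', ‖∑ i, conj (A i k) * A i l'‖ :=
          le_ciSup (f := fun l' => ⨆ _ : k ≠ l', ‖∑ i, conj (A i k) * A i l'‖)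
            (Set.Finite.bddAbove (Set.finite_range _)) k
      _ ≤ ⨆ k', ⨆ l', ⨆ _ : k' ≠ l', ‖∑ i, conj (A i k') * A i l'‖ :=
          le_ciSup (f := fun k' => ⨆ l', ⨆ _ : k' ≠ l', ‖∑ i, conj (A i k') * A i l'‖)
            (Set.Finite.bddAbove (Set.finite_range _)) k

lemma norm_gram_le_one (C : Matrix m n ℂ) (hC : unitCols C) (k l : n) :
    ‖∑ i, conj (C i k) * C i l‖ ≤ 1 := by
  let x : EuclideanSpace ℂ m := WithLp.toLp 2 (fun i => C i k)
  let y : EuclideanSpace ℂ m := WithLp.toLp 2 (fun i => C i l)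
  have h := norm_inner_le_norm (𝕜 := ℂ) x y
  have hinner : (inner ℂ x y : ℂ) = ∑ i, conj (C i k) * C i l := by
    simp [x, y, PiLp.inner_apply, RCLike.inner_apply', mul_comm]
  have hx : ‖x‖ = 1 := by
    rw [EuclideanSpace.norm_eq]
    simp only [x, PiLp.toLp_apply]
    rw [hC k, Real.sqrt_one]
  have hy : ‖y‖ = 1 := by
    rw [EuclideanSpace.norm_eq]
    simp only [y, PiLp.toLp_apply]
    rw [hC l, Real.sqrt_one]
  rw [hinner, hx, hy] at h
  simpa using h

lemma coh_le_of_bound (A : Matrix m n ℂ) (c : ℝ) (hc : 0 ≤ c)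
    (h : ∀ k l : n, k ≠ l → ‖∑ i, conj (A i k) * A i l‖ ≤ c) : coh A ≤ c := by
  rw [coh]
  refine Real.iSup_le (fun k => Real.iSup_le (fun l => Real.iSup_le (fun hkl => h k l hkl) hc) hc) hc

end Coh

/-- Theorem 6 ([kuppinger2010a, Thm. 2]): ℓ⁰ uniqueness for the concatenated dictionary
D = [A B] under the coherence-based threshold (f(x̄) + x̄)/2. -/
theorem concatenated_P0_unique_solution
    {M Na Nb : ℕ} (A : Matrix (Fin M) (Fin Na) ℂ) (B : Matrix (Fin M) (Fin Nb) ℂ)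
    (hA : unitCols A) (hB : unitCols B)
    (μa μb μd : ℝ) (hμa : μa = coh A) (hμb : μb = coh B) (hab : μa ≤ μb)
    (D : Matrix (Fin M) (Fin Na ⊕ Fin Nb) ℂ) (hD : D = Matrix.fromCols A B)
    (hμd : μd = coh D) (hμdpos : 0 < μd)
    (f : ℝ → ℝ)
    (hf : ∀ u, f u = ((1 + μa) * (1 + μb) - u * μb * (1 + μa)) /
      (u * (μd ^ 2 - μa * μb) + μa * (1 + μb)))
    (xb xs xbar : ℝ)
    (hxb : xb = (1 + μb) / (μb + μd ^ 2))
    (hxs₁ : (μa = μb ∧ μb = μd) → xs = 1 / μd)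
    (hxs₂ : ¬(μa = μb ∧ μb = μd) →
      xs = (μd * Real.sqrt ((1 + μa) * (1 + μb)) - μa - μa * μb) / (μd ^ 2 - μa * μb))
    (hxbar : xbar = min xb xs)
    (w : Fin Na ⊕ Fin Nb → ℂ)
    (hw : (l0 w : ℝ) < (f xbar + xbar) / 2) :
    ∀ w' : Fin Na ⊕ Fin Nb → ℂ, D.mulVec w' = D.mulVec w → l0 w' ≤ l0 w → w' = w := by
  classical
  intro w' hDw hl0le
  by_contra hne
  -- difference vector
  set v : Fin Na ⊕ Fin Nb → ℂ := w' - w with hv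
  have hvne : v ≠ 0 := sub_ne_zero.2 hne
  have hDv : D.mulVec v = 0 := by
    rw [hv, Matrix.mulVec_sub, hDw, sub_self]
  set u : Fin Na → ℂ := v ∘ Sum.inl with hu
  set s : Fin Nb → ℂ := v ∘ Sum.inr with hs
  have helim : v = Sum.elim u s := by funext x; cases x <;> rfl
  have hAB : A.mulVec u + B.mulVec s = 0 := by
    rw [← Matrix.fromCols_mulVec_sumElim, ← helim, ← hD, hDv]
  have hAu : A.mulVec u = -(B.mulVec s) := by
    rw [eq_neg_iff_add_eq_zero]; exact hAB
  -- coherence facts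
  have hμd0 : (0:ℝ) ≤ μd := hμdpos.le
  have hμa0 : 0 ≤ μa := hμa ▸ coh_nonneg A
  have hDunit : unitCols D := by
    intro k
    cases k with
    | inl k => simpa [hD, Matrix.fromCols_apply_inl] using hA k
    | inr k => simpa [hD, Matrix.fromCols_apply_inr] using hB k
  have hδ1 : μd ≤ 1 := by
    rw [hμd]
    exact coh_le_of_bound D 1 zero_le_one fun k l _ => norm_gram_le_one D hDunit k l
  have hbound_a : ∀ k l : Fin Na, k ≠ l → ‖∑ i, conj (A i k) * A i l‖ ≤ μa :=
    fun k l h => hμa ▸ norm_le_coh A h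
  have hbound_b : ∀ k l : Fin Nb, k ≠ l → ‖∑ i, conj (B i k) * B i l‖ ≤ μb :=
    fun k l h => hμb ▸ norm_le_coh B h
  have hbd : μb ≤ μd := by
    rw [hμb, hμd]
    apply coh_le_of_bound B (coh D) (coh_nonneg D)
    intro k l hkl
    have h := norm_le_coh D (k := Sum.inr k) (l := Sum.inr l) (by simpa using hkl)
    simpa [hD, Matrix.fromCols_apply_inr] using h
  have hcross : ∀ (k : Fin Na) (l : Fin Nb), ‖∑ i, conj (A i k) * B i l‖ ≤ μd := by
    intro k l
    have h := norm_le_coh D (k := Sum.inl k) (l := Sum.inr l) (by simp)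
    rw [hμd]
    simpa [hD, Matrix.fromCols_apply_inl, Matrix.fromCols_apply_inr] using h
  -- quadratic form bounds
  set P := l2sq (A.mulVec u) with hP
  have hPnn : 0 ≤ P := l2sq_nonneg _
  have h1 : (1 + μa) * l2sq u - μa * (l1 u) ^ 2 ≤ P :=
    gram_lower A hA μa hbound_a u
  have hBs : l2sq (B.mulVec s) = P := by
    rw [hP, hAu]
    simp only [l2sq, Pi.neg_apply, norm_neg]
  have h2 : (1 + μb) * l2sq s - μb * (l1 s) ^ 2 ≤ P :=
    hBs ▸ gram_lower B hB μb hbound_b s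
  have h3 : P ≤ μd * (l1 u * l1 s) := by
    have hPc : ((P : ℝ) : ℂ) = ∑ i, conj ((A.mulVec u) i) * ((A.mulVec u) i) :=
      (sum_conj_self _).symm
    have hPc2 : ((P : ℝ) : ℂ) = -∑ i, conj ((A.mulVec u) i) * ((B.mulVec s) i) := by
      rw [hPc]
      rw [show (∑ i, conj ((A.mulVec u) i) * ((A.mulVec u) i))
          = ∑ i, conj ((A.mulVec u) i) * (-((B.mulVec s) i)) from
        Finset.sum_congr rfl fun i _ => by rw [show (A.mulVec u) i = -((B.mulVec s) i) by
          rw [hAu]; rfl]]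
      rw [← Finset.sum_neg_distrib]
      exact Finset.sum_congr rfl fun i _ => by ring
    have hnorm : P = ‖((P : ℝ) : ℂ)‖ := by
      rw [Complex.norm_real, Real.norm_eq_abs, abs_of_nonneg hPnn]
    rw [hnorm, hPc2, norm_neg]
    exact gram_upper A B μd (fun k l => hcross k l) u s
  have hcu : (l1 u) ^ 2 ≤ (l0 u : ℝ) * l2sq u := l1_sq_le u
  have hcs : (l1 s) ^ 2 ≤ (l0 s : ℝ) * l2sq s := l1_sq_le s
  have hXa : 0 < l2sq u → 1 ≤ (l0 u : ℝ) := by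
    intro hpos
    have hune : u ≠ 0 := by
      intro h0; rw [h0] at hpos; simp [l2sq] at hpos
    exact_mod_cast l0_pos u hune
  have hYb : 0 < l2sq s → 1 ≤ (l0 s : ℝ) := by
    intro hpos
    have hsne : s ≠ 0 := by
      intro h0; rw [h0] at hpos; simp [l2sq] at hpos
    exact_mod_cast l0_pos s hsne
  have habs : 0 < l2sq u ∨ 0 < l2sq s := by
    by_cases hu0 : u = 0
    · right
      apply l2sq_pos
      intro hs0
      apply hvne
      rw [helim, hu0, hs0]
      funext x; cases x <;> rfl
    · left; exact l2sq_pos u hu0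
  -- apply the core optimization bound
  have hcore := core μa μb μd hμa0 hab hbd hδ1 hμdpos f hf xb xs xbar hxb hxs₁ hxs₂ hxbar
    (l0 u : ℝ) (l0 s : ℝ) (l2sq u) (l2sq s) P (l1 u) (l1 s)
    (Nat.cast_nonneg _) (Nat.cast_nonneg _) hXa hYb
    (l2sq_nonneg _) (l2sq_nonneg _) habs
    (l1_nonneg _) (l1_nonneg _) hPnn h1 h2 h3 hcu hcs
  -- count nonzeros
  have hsplit : (l0 v : ℝ) = (l0 u : ℝ) + (l0 s : ℝ) := by
    have := l0_sum_split v
    rw [← hu, ← hs] at this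
    exact_mod_cast this
  have hvle : (l0 v : ℝ) ≤ (l0 w' : ℝ) + (l0 w : ℝ) := by
    have := l0_sub_le w' w
    exact_mod_cast this
  have hl0le' : (l0 w' : ℝ) ≤ (l0 w : ℝ) := by exact_mod_cast hl0le
  linarith
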